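/- Let (X, 𝓑, μ, f) be a dissipative system of bounded distortion generated by W, with f bijective and both f and f⁻¹ satisfying condition (⋆), and let 1 ≤ p < ∞. If condition 𝓗𝓒 holds, i.e. limsup_{n→∞} sup_{k∈ℤ} (μ(f^k(W))/μ(f^{k+n}(W)))^{1/n} < 1, then the composition operator T_f on L^p(X, μ) has spectral radius lim_{n→∞} ‖T_f^n‖^{1/n} strictly less than 1 (T_f is a contraction). -/

import Mathlib

open MeasureTheory Filter Set Function Topology ENNReal

noncomputable section

namespace GHShadow

/-- The shadowing property for an invertible bounded linear operator. -/
def HasShadowing {E : Type*} [NormedAddCommGroup E] [NormedSpace ℝ E]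
    (T : E ≃L[ℝ] E) : Prop :=
  ∀ ε : ℝ, 0 < ε → ∃ δ : ℝ, 0 < δ ∧ ∀ x : ℤ → E,
    (∀ n : ℤ, ‖T (x n) - x (n + 1)‖ ≤ δ) →
      ∃ y : E, ∀ n : ℤ, ‖(T ^ n) y - x n‖ < ε

/-- `lim ‖Tⁿ‖^{1/n}` exists and is `< 1`. -/
def SpectralRadiusLtOne {E : Type*} [NormedAddCommGroup E] [NormedSpace ℝ E]
    (T : E →L[ℝ] E) : Prop :=
  ∃ r : ℝ, r < 1 ∧ Tendsto (fun n : ℕ => ‖T ^ n‖ ^ (1 / (n : ℝ))) atTop (nhds r)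

/-- The restriction of `T` to `M` has spectral radius `< 1`
(equivalently, is a proper contraction in an equivalent norm). -/
def ContractsOn {E : Type*} [NormedAddCommGroup E] [NormedSpace ℝ E]
    (T : E ≃L[ℝ] E) (M : Submodule ℝ E) : Prop :=
  ∃ C : ℝ, 0 < C ∧ ∃ t : ℝ, 0 < t ∧ t < 1 ∧
    ∀ n : ℕ, ∀ x ∈ M, ‖(T ^ n) x‖ ≤ C * t ^ n * ‖x‖

def GeneralizedHyperbolic {E : Type*} [NormedAddCommGroup E] [NormedSpace ℝ E]
    (T : E ≃L[ℝ] E) : Prop :=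
  ∃ M N : Submodule ℝ E, IsClosed (M : Set E) ∧ IsClosed (N : Set E) ∧
    IsCompl M N ∧ (∀ x ∈ M, T x ∈ M) ∧ (∀ x ∈ N, T.symm x ∈ N) ∧
    ContractsOn T M ∧ ContractsOn T.symm N

variable {X : Type*} [MeasurableSpace X]

/-- image of `B` under the `k`-th iterate of the invertible map `f`. -/
def img (f : Equiv.Perm X) (k : ℤ) (B : Set X) : Set X := ⇑(f ^ k) '' B

/-- `(X, 𝓑, μ, f)` is a dissipative system generated by `W`. -/
structure IsDissipative (μ : Measure X) (f : Equiv.Perm X) (W : Set X) : Prop where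
  sigmaFin : SigmaFinite μ
  meas_f : Measurable f
  meas_symm : Measurable f.symm
  meas_W : MeasurableSet W
  pos : 0 < μ W
  fin : μ W < ⊤
  disj : Pairwise fun k l : ℤ => Disjoint (img f k W) (img f l W)
  cover : (⋃ k : ℤ, img f k W) = univ

/-- `f` is of bounded distortion on `W` with constant `K`. -/
def BoundedDistortion (μ : Measure X) (f : Equiv.Perm X) (W : Set X) (K : ℝ≥0∞) : Prop :=
  ∀ k : ℤ, ∀ B : Set X, MeasurableSet B → B ⊆ W →
    (1 / K) * (μ (img f k W) * μ B) ≤ μ (img f k B) * μ W ∧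
      μ (img f k B) * μ W ≤ K * (μ (img f k W) * μ B)

/-- condition (⋆) for a transformation `g`. -/
def CondStar (μ : Measure X) (g : X → X) : Prop :=
  ∃ c : ℝ≥0∞, 0 < c ∧ c ≠ ⊤ ∧ ∀ B : Set X, MeasurableSet B → μ (g ⁻¹' B) ≤ c * μ B

/-- condition 𝓗𝓒. -/
def CondHC (μ : Measure X) (f : Equiv.Perm X) (W : Set X) : Prop :=
  limsup (fun n : ℕ =>
    ⨆ k : ℤ, (μ (img f k W) / μ (img f (k + (n : ℤ)) W)) ^ (1 / (n : ℝ))) atTop < 1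

/-- condition 𝓗𝓓. -/
def CondHD (μ : Measure X) (f : Equiv.Perm X) (W : Set X) : Prop :=
  1 < liminf (fun n : ℕ =>
    ⨅ k : ℤ, (μ (img f k W) / μ (img f (k + (n : ℤ)) W)) ^ (1 / (n : ℝ))) atTop

/-- condition 𝓖𝓗. -/
def CondGH (μ : Measure X) (f : Equiv.Perm X) (W : Set X) : Prop :=
  limsup (fun n : ℕ =>
      ⨆ m : ℕ, (μ (img f (-(m : ℤ) - (n : ℤ)) W) / μ (img f (-(m : ℤ)) W)) ^ (1 / (n : ℝ)))
      atTop < 1 ∧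
  1 < liminf (fun n : ℕ =>
      ⨅ m : ℕ, (μ (img f (m : ℤ) W) / μ (img f ((m : ℤ) + (n : ℤ)) W)) ^ (1 / (n : ℝ))) atTop

/-- `T` represents the composition operator `φ ↦ φ ∘ f` on `L^p(X,μ)`. -/
def RepsComp (μ : Measure X) (p : ℝ≥0∞) [Fact (1 ≤ p)] (f : X → X)
    (T : Lp ℝ p μ ≃L[ℝ] Lp ℝ p μ) : Prop :=
  ∀ φ : Lp ℝ p μ, ⇑(T φ) =ᵐ[μ] fun x => (φ : X → ℝ) (f x)

/-!
From 𝓗𝓒 pick `ρ < 1` and `N ≥ 1` with `μ(f^k W) ≤ ρ^N μ(f^(k+N) W)` for all `k` and `K²ρ^N < 1`.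
Cut a measurable set `B` along the tower `f^k W` and pull each piece back to `W`: bounded
distortion, applied at the levels `k` and `k - N`, turns the ratio of the levels into
`μ(f^(-N) B) ≤ K²ρ^N μ(B)`, hence `‖T_f^N‖ ≤ (K²ρ^N)^(1/p) < 1`. As `T_f` is invertible,
`n ↦ log ‖T_f^n‖` is subadditive with `log ‖T_f^n‖ / n` bounded below, so by Fekete's lemma
`‖T_f^n‖^(1/n)` converges, to a limit at most `‖T_f^N‖^(1/N) < 1`.
-/

section NormedRing

variable {R : Type*} [NormedRing R] [Nontrivial R]

theorem neg_log_norm_inv_le_log_norm_pow_div (a : Rˣ) {n : ℕ} (hn : n ≠ 0) :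
    -Real.log ‖(↑a⁻¹ : R)‖ ≤ Real.log ‖(a : R) ^ n‖ / n := by
  have hpos : ∀ b : Rˣ, ∀ m : ℕ, 0 < ‖(b : R) ^ m‖ := fun b m => norm_pos_iff.2 (b ^ m).ne_zero
  have hinv : 0 < ‖(↑a⁻¹ : R)‖ := by simpa only [pow_one] using hpos a⁻¹ 1
  have hone : 1 ≤ ‖(a : R) ^ n‖ * ‖(↑a⁻¹ : R)‖ ^ n :=
    calc (1 : ℝ) ≤ ‖(1 : R)‖ := one_le_norm_one R
      _ = ‖(a : R) ^ n * (↑a⁻¹ : R) ^ n‖ := by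
        rw [← Units.val_pow_eq_pow_val, ← Units.val_pow_eq_pow_val, ← Units.val_mul, inv_pow,
          mul_inv_cancel, Units.val_one]
      _ ≤ ‖(a : R) ^ n‖ * ‖(↑a⁻¹ : R)‖ ^ n :=
        (norm_mul_le _ _).trans (by gcongr; exact norm_pow_le' _ (Nat.pos_of_ne_zero hn))
  have hlog := Real.log_le_log one_pos hone
  rw [Real.log_one, Real.log_mul (hpos a n).ne' (pow_pos hinv n).ne', Real.log_pow] at hlog
  rw [le_div_iff₀ (by positivity)]
  linarith

theorem exists_tendsto_norm_pow_one_div (a : Rˣ) :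
    ∃ r : ℝ, Tendsto (fun n : ℕ => ‖(a : R) ^ n‖ ^ (1 / (n : ℝ))) atTop (𝓝 r) ∧
      ∀ n : ℕ, n ≠ 0 → r ≤ ‖(a : R) ^ n‖ ^ (1 / (n : ℝ)) := by
  set u : ℕ → ℝ := fun n => Real.log ‖(a : R) ^ n‖
  have hpos : ∀ n : ℕ, 0 < ‖(a : R) ^ n‖ := fun n => norm_pos_iff.2 (a ^ n).ne_zero
  have hsub : Subadditive u := fun m n => by
    simp only [u]
    rw [← Real.log_mul (hpos m).ne' (hpos n).ne', pow_add]
    exact Real.log_le_log (pow_add (a : R) m n ▸ hpos _) (norm_mul_le _ _)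
  have hbdd : BddBelow (range fun n => u n / n) := by
    refine ⟨min 0 (-Real.log ‖(↑a⁻¹ : R)‖), ?_⟩
    rintro _ ⟨n, rfl⟩
    rcases eq_or_ne n 0 with rfl | hn
    · simp
    · exact (min_le_right _ _).trans (neg_log_norm_inv_le_log_norm_pow_div a hn)
  have hexp : ∀ n : ℕ, Real.exp (u n / n) = ‖(a : R) ^ n‖ ^ (1 / (n : ℝ)) := fun n => by
    rw [Real.rpow_def_of_pos (hpos n), mul_one_div]
  refine ⟨Real.exp hsub.lim, ?_, fun n hn => ?_⟩
  · simpa only [Function.comp_def, hexp] using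
      (Real.continuous_exp.tendsto _).comp (hsub.tendsto_lim hbdd)
  · rw [← hexp]
    exact Real.exp_le_exp.2 (hsub.lim_le_div hbdd hn)

end NormedRing

theorem spectralRadiusLtOne_of_norm_pow_lt_one {E : Type*} [NormedAddCommGroup E]
    [NormedSpace ℝ E] [Nontrivial E] (T : E ≃L[ℝ] E) {N : ℕ} (hN : N ≠ 0)
    (hTN : ‖(T : E →L[ℝ] E) ^ N‖ < 1) : SpectralRadiusLtOne (T : E →L[ℝ] E) := by
  obtain ⟨r, hr, hle⟩ := exists_tendsto_norm_pow_one_div T.toUnit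
  refine ⟨r, (hle N hN).trans_lt ?_, hr⟩
  exact Real.rpow_lt_one (norm_nonneg _) hTN (by positivity)

section Img

variable {X : Type*}

theorem img_img (f : Equiv.Perm X) (j k : ℤ) (B : Set X) :
    img f j (img f k B) = img f (j + k) B := by
  simp only [img, ← Set.image_comp, ← Equiv.Perm.coe_mul, ← zpow_add]

theorem img_zero (f : Equiv.Perm X) (B : Set X) : img f 0 B = B := by simp [img]

theorem img_eq_preimage (f : Equiv.Perm X) (k : ℤ) (B : Set X) :
    img f k B = ⇑(f ^ (-k)) ⁻¹' B := by
  rw [img, Equiv.image_eq_preimage_symm, zpow_neg]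
  rfl

theorem img_neg_natCast (f : Equiv.Perm X) (n : ℕ) (B : Set X) :
    img f (-(n : ℤ)) B = (⇑f)^[n] ⁻¹' B := by
  rw [img_eq_preimage, neg_neg, zpow_natCast, Equiv.Perm.coe_pow]

end Img

section Dissipative

variable {X : Type*} [MeasurableSpace X] {μ : Measure X} {f : Equiv.Perm X} {W : Set X}
  {K r : ℝ≥0∞}

theorem measurable_zpow (hf : Measurable f) (hf' : Measurable f.symm) :
    ∀ k : ℤ, Measurable ⇑(f ^ k)
  | .ofNat n => by
    simpa only [Int.ofNat_eq_natCast, zpow_natCast, Equiv.Perm.coe_pow] using hf.iterate n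
  | .negSucc n => by rw [zpow_negSucc, ← inv_pow, Equiv.Perm.coe_pow]; exact hf'.iterate (n + 1)

theorem measurableSet_img (hf : Measurable f) (hf' : Measurable f.symm) (k : ℤ) {B : Set X}
    (hB : MeasurableSet B) : MeasurableSet (img f k B) := by
  rw [img_eq_preimage]
  exact measurable_zpow hf hf' (-k) hB

theorem BoundedDistortion.measure_img_le (hbd : BoundedDistortion μ f W K)
    (hK0 : K ≠ 0) (hK : K ≠ ⊤) (hW0 : μ W ≠ 0) (hW : μ W ≠ ⊤) {C : Set X}
    (hC : MeasurableSet C) (hCW : C ⊆ W) {j k : ℤ}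
    (hjk : μ (img f j W) ≤ r * μ (img f k W)) :
    μ (img f j C) ≤ K * K * r * μ (img f k C) := by
  have hk : μ (img f k W) * μ C ≤ K * (μ (img f k C) * μ W) := by
    have := (hbd k C hC hCW).1
    rwa [one_div, ENNReal.inv_mul_le_iff hK0 hK] at this
  refine (ENNReal.mul_le_mul_iff_left hW0 hW).1 ?_
  calc μ (img f j C) * μ W ≤ K * (μ (img f j W) * μ C) := (hbd j C hC hCW).2
    _ ≤ K * (r * μ (img f k W) * μ C) := by gcongr
    _ = K * r * (μ (img f k W) * μ C) := by ring
    _ ≤ K * r * (K * (μ (img f k C) * μ W)) := by gcongr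
    _ = K * K * r * μ (img f k C) * μ W := by ring

theorem BoundedDistortion.measure_img_le_of_subset_img (hbd : BoundedDistortion μ f W K)
    (hK0 : K ≠ 0) (hK : K ≠ ⊤) (hdiss : IsDissipative μ f W) {m k : ℤ}
    (hmk : μ (img f (m + k) W) ≤ r * μ (img f k W)) {B : Set X} (hB : MeasurableSet B)
    (hBk : B ⊆ img f k W) : μ (img f m B) ≤ K * K * r * μ B := by
  set C := img f (-k) B
  have hkC : img f k C = B := by rw [img_img, add_neg_cancel, img_zero]
  have hCW : C ⊆ W := by
    have h : C ⊆ img f (-k) (img f k W) := image_mono hBk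
    rwa [img_img, neg_add_cancel, img_zero] at h
  have hC : MeasurableSet C := measurableSet_img hdiss.meas_f hdiss.meas_symm _ hB
  rw [← hkC, img_img]
  exact hbd.measure_img_le hK0 hK hdiss.pos.ne' hdiss.fin.ne hC hCW hmk

theorem IsDissipative.map_iterate_le_smul (hdiss : IsDissipative μ f W)
    (hbd : BoundedDistortion μ f W K) (hK0 : K ≠ 0) (hK : K ≠ ⊤) {n : ℕ}
    (hr : ∀ k : ℤ, μ (img f k W) ≤ r * μ (img f (k + n) W)) :
    μ.map (⇑f)^[n] ≤ (K * K * r) • μ := by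
  have hfn : Measurable (⇑f)^[n] := hdiss.meas_f.iterate n
  refine Measure.le_iff.2 fun B hB => ?_
  have hmeas : ∀ k : ℤ, MeasurableSet (B ∩ img f k W) := fun k =>
    hB.inter (measurableSet_img hdiss.meas_f hdiss.meas_symm k hdiss.meas_W)
  have hdisj : Pairwise (Disjoint on fun k : ℤ => B ∩ img f k W) := fun k l hkl =>
    (hdiss.disj hkl).mono inter_subset_right inter_subset_right
  have hB_eq : B = ⋃ k : ℤ, B ∩ img f k W := by rw [← inter_iUnion, hdiss.cover, inter_univ]
  have hpiece (k : ℤ) :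
      μ ((⇑f)^[n] ⁻¹' (B ∩ img f k W)) ≤ K * K * r * μ (B ∩ img f k W) := by
    rw [← img_neg_natCast]
    refine hbd.measure_img_le_of_subset_img hK0 hK hdiss ?_ (hmeas k) inter_subset_right
    simpa using hr (-n + k)
  rw [Measure.map_apply hfn hB, Measure.smul_apply, smul_eq_mul]
  calc μ ((⇑f)^[n] ⁻¹' B) = ∑' k : ℤ, μ ((⇑f)^[n] ⁻¹' (B ∩ img f k W)) := by
        conv_lhs => rw [hB_eq, preimage_iUnion]
        exact measure_iUnion (fun k l hkl => (hdisj hkl).preimage _) fun k => hfn (hmeas k)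
    _ ≤ ∑' k : ℤ, K * K * r * μ (B ∩ img f k W) := ENNReal.tsum_le_tsum hpiece
    _ = K * K * r * μ B := by rw [ENNReal.tsum_mul_left, ← measure_iUnion hdisj hmeas, ← hB_eq]

theorem CondHC.exists_lt_one_eventually_le (hHC : CondHC μ f W) :
    ∃ ρ : ℝ≥0∞, ρ < 1 ∧
      ∀ᶠ n : ℕ in atTop, ∀ k : ℤ, μ (img f k W) ≤ ρ ^ n * μ (img f (k + n) W) := by
  obtain ⟨ρ, hLρ, hρ1⟩ := exists_between hHC
  have hρ0 : ρ ≠ 0 := (zero_le.trans_lt hLρ).ne'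
  refine ⟨ρ, hρ1, ?_⟩
  filter_upwards [eventually_lt_of_limsup_lt hLρ, eventually_ne_atTop 0] with n hn hn0 k
  have hk := (le_iSup (fun k : ℤ =>
    (μ (img f k W) / μ (img f (k + n) W)) ^ (1 / (n : ℝ))) k).trans_lt hn
  rw [one_div, ENNReal.rpow_inv_lt_iff (by positivity), ENNReal.rpow_natCast] at hk
  -- `ρ ≠ 0` makes `a / b ≤ ρ ^ n` give `a ≤ ρ ^ n * b` even when `b` is `0` or `⊤`
  exact (ENNReal.div_le_iff_le_mul (.inr (pow_ne_top hρ1.ne_top)) (.inr (pow_ne_zero n hρ0))).1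
    hk.le

end Dissipative

section Lp

variable {X : Type*} [MeasurableSpace X] {μ : Measure X} {p : ℝ≥0∞} [Fact (1 ≤ p)]

theorem nontrivial_Lp_of_measure_ne_zero {s : Set X} (hs : MeasurableSet s) (hs0 : μ s ≠ 0)
    (hsT : μ s ≠ ⊤) : Nontrivial (Lp ℝ p μ) := by
  refine nontrivial_of_ne (indicatorConstLp p hs hsT (1 : ℝ)) 0 fun h => ?_
  have hp0 : p ≠ 0 := (zero_lt_one.trans_le Fact.out).ne'
  have hnorm : ‖indicatorConstLp p hs hsT (1 : ℝ)‖ = ‖(1 : ℝ)‖ * μ.real s ^ (1 / p.toReal) :=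
    norm_indicatorConstLp' hp0 hs0
  rw [h, norm_zero, norm_one, one_mul] at hnorm
  exact (Real.rpow_pos_of_pos (ENNReal.toReal_pos hs0 hsT) _).ne' hnorm.symm

theorem CondStar.quasiMeasurePreserving {g : X → X} (hg : Measurable g) (h : CondStar μ g) :
    Measure.QuasiMeasurePreserving g μ μ := by
  obtain ⟨c, -, -, hc⟩ := h
  refine ⟨hg, Measure.AbsolutelyContinuous.mk fun s hs hs0 => ?_⟩
  rw [Measure.map_apply hg hs]
  simpa [hs0] using hc s hs

theorem RepsComp.pow_apply_ae_eq {f : Equiv.Perm X} {T : Lp ℝ p μ ≃L[ℝ] Lp ℝ p μ}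
    (hT : RepsComp μ p f T) (hf : Measure.QuasiMeasurePreserving f μ μ) (n : ℕ)
    (φ : Lp ℝ p μ) : ⇑(((T : Lp ℝ p μ →L[ℝ] Lp ℝ p μ) ^ n) φ) =ᵐ[μ] ⇑φ ∘ (⇑f)^[n] := by
  induction n with
  | zero => rfl
  | succ n ih =>
    rw [pow_succ', mul_apply_eq_comp, iterate_succ, ← comp_assoc]
    exact (hT _).trans (hf.ae_eq_comp ih)

theorem norm_le_of_map_le_smul (hp : p ≠ ⊤) {A : Lp ℝ p μ →L[ℝ] Lp ℝ p μ} {g : X → X}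
    (hg : Measurable g) (hA : ∀ φ : Lp ℝ p μ, ⇑(A φ) =ᵐ[μ] ⇑φ ∘ g) {c : ℝ≥0∞} (hc : c ≠ ⊤)
    (hmap : μ.map g ≤ c • μ) : ‖A‖ ≤ (c ^ (1 / p).toReal).toReal := by
  refine A.opNorm_le_bound ENNReal.toReal_nonneg fun φ => ?_
  rw [Lp.norm_def, Lp.norm_def, eLpNorm_congr_ae (hA φ), ← ENNReal.toReal_mul,
    ← eLpNorm_map_measure (Lp.stronglyMeasurable φ).aestronglyMeasurable hg.aemeasurable]
  refine ENNReal.toReal_mono (ENNReal.mul_ne_top (by finiteness) (Lp.eLpNorm_ne_top φ)) ?_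
  calc eLpNorm φ p (μ.map g) ≤ eLpNorm φ p (c • μ) := eLpNorm_mono_measure _ hmap
    _ = c ^ (1 / p).toReal * eLpNorm φ p μ := eLpNorm_smul_measure_of_ne_top hp _ c

end Lp

theorem contraction_of_condHC_general
    {X : Type*} [MeasurableSpace X] (μ : Measure X) (f : Equiv.Perm X) (W : Set X)
    (p : ℝ≥0∞) [Fact (1 ≤ p)] (hp : p ≠ ⊤)
    (hdiss : IsDissipative μ f W)
    (K : ℝ≥0∞) (hK0 : 0 < K) (hKfin : K ≠ ⊤)
    (hbd : BoundedDistortion μ f W K)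
    (hstar : CondStar μ f)
    (T : Lp ℝ p μ ≃L[ℝ] Lp ℝ p μ) (hT : RepsComp μ p f T)
    (hHC : CondHC μ f W) :
    SpectralRadiusLtOne (T : Lp ℝ p μ →L[ℝ] Lp ℝ p μ) := by
  obtain ⟨ρ, hρ1, hρ⟩ := hHC.exists_lt_one_eventually_le
  have hsmall : ∀ᶠ n : ℕ in atTop, K * K * ρ ^ n < 1 :=
    (ENNReal.Tendsto.const_mul (ENNReal.tendsto_pow_atTop_nhds_zero_of_lt_one hρ1)
      (.inr (by finiteness))).eventually_lt_const (by simp)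
  obtain ⟨N, hN0, hρN, hNc⟩ := ((eventually_ne_atTop 0).and (hρ.and hsmall)).exists
  have hp0 : 0 < (1 / p).toReal :=
    ENNReal.toReal_pos (by simpa using hp) (by simpa using (zero_lt_one.trans_le Fact.out).ne')
  have hTN : ‖(T : Lp ℝ p μ →L[ℝ] Lp ℝ p μ) ^ N‖ < 1 := by
    refine (norm_le_of_map_le_smul hp (hdiss.meas_f.iterate N)
      (hT.pow_apply_ae_eq (hstar.quasiMeasurePreserving hdiss.meas_f) N) (by finiteness)
      (hdiss.map_iterate_le_smul hbd hK0.ne' hKfin hρN)).trans_lt ?_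
    exact ENNReal.toReal_lt_of_lt_ofReal (by simpa using ENNReal.rpow_lt_one hNc hp0)
  have := nontrivial_Lp_of_measure_ne_zero (p := p) hdiss.meas_W hdiss.pos.ne' hdiss.fin.ne
  exact spectralRadiusLtOne_of_norm_pow_lt_one T hN0 hTN

/-- Theorem SS, part 1: if condition 𝓗𝓒 holds, then the composition
operator `T_f` on `L^p(X,μ)` has spectral radius `lim ‖T_f^n‖^{1/n} < 1`
(it is a contraction). -/
theorem contraction_of_condHC
    {X : Type*} [MeasurableSpace X] (μ : Measure X) (f : Equiv.Perm X) (W : Set X)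
    (p : ℝ≥0∞) [Fact (1 ≤ p)] (hp : p ≠ ⊤)
    (hdiss : IsDissipative μ f W)
    (K : ℝ≥0∞) (hK0 : 0 < K) (hKfin : K ≠ ⊤)
    (hbd : BoundedDistortion μ f W K)
    (hstar : CondStar μ f) (hstar' : CondStar μ f.symm)
    (T : Lp ℝ p μ ≃L[ℝ] Lp ℝ p μ) (hT : RepsComp μ p f T)
    (hHC : CondHC μ f W) :
    SpectralRadiusLtOne (T : Lp ℝ p μ →L[ℝ] Lp ℝ p μ) :=
  contraction_of_condHC_general μ f W p hp hdiss K hK0 hKfin hbd hstar T hT hHC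

end GHShadow
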